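/- arXiv:2006.15690 — 4 statements merged into one kernel-verified Lean document; each statement's English description precedes it below -/
import Mathlib

section
/- Fix a bounded function phi : S x A -> R and a deterministic Markov policy pi : S -> A. Let the actions a_t be generated by any non-anticipative (admissible) policy, with states s_{t+1} = f(s_t, a_t, w_{t+1}) started from any initial (s_0, a_0), and define the penalty terms z_t^pi(s_t, a_t, w_{t+1} | phi) = gamma^{t+1} * ( phi(s_{t+1}, pi(s_{t+1})) - E_{w ~ P}[ phi(f(s_t, a_t, w), pi(f(s_t, a_t, w))) ] ). Then the penalty is dual feasible: the series sum_{t=0}^{infinity} z_t^pi(s_t, a_t, w_{t+1} | phi) converges absolutely almost surely and E[ sum_{t=0}^{infinity} z_t^pi(s_t, a_t, w_{t+1} | phi) ] = 0. -/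
open MeasureTheory ProbabilityTheory Filter

namespace LBQL

noncomputable section

variable {S A W : Type*}

/-- The state-action trajectory generated by the transition function `f`, a deterministic
Markov policy `π`, the initial state-action pair `sa`, and the disturbance sequence `w`
(with the convention that `w t` plays the role of `w_{t+1}`, i.e.
`s_{t+1} = f (s_t, a_t, w t)` and `a_{t+1} = π (s_{t+1})`). -/
def traj (f : S → A → W → S) (π : S → A) (sa : S × A) (w : ℕ → W) : ℕ → S × A
  | 0 => sa
  | t + 1 =>
      (f (traj f π sa w t).1 (traj f π sa w t).2 (w t),
        π (f (traj f π sa w t).1 (traj f π sa w t).2 (w t)))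

/-- The discounted infinite-horizon action-value `Q^π(s,a)` of the deterministic Markov
policy `π`, defined as the expectation, over an i.i.d. disturbance sequence `wseq` on the
probability space `(Ω, μ)`, of the total discounted reward. -/
def Qpol {Ω : Type*} [MeasurableSpace Ω] (μ : Measure Ω) (wseq : ℕ → Ω → W)
    (γ : ℝ) (r : S → A → ℝ) (f : S → A → W → S) (π : S → A) (s : S) (a : A) : ℝ :=
  ∫ ω, ∑' t, γ ^ t *
      r (traj f π (s, a) (fun i => wseq i ω) t).1
        (traj f π (s, a) (fun i => wseq i ω) t).2 ∂μ

/-- The optimal action-value function `Q*(s,a) = max_π Q^π(s,a)`. -/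
def Qopt {Ω : Type*} [MeasurableSpace Ω] (μ : Measure Ω) (wseq : ℕ → Ω → W)
    (γ : ℝ) (r : S → A → ℝ) (f : S → A → W → S) (s : S) (a : A) : ℝ :=
  ⨆ π : S → A, Qpol μ wseq γ r f π s a

/-- Transition function of the absorption-time (absorbing-chain) formulation: the state
space is augmented with an absorbing state (`none`); the disturbance is a pair of a
Bernoulli "survival" coin and an original disturbance, and the chain is killed (absorbed)
whenever the coin is `false`. -/
def habs (f : S → A → W → S) : Option S → A → Bool × W → Option S
  | some s, a, d => if d.1 then some (f s a d.2) else none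
  | none, _, _ => none

/-- Reward of the absorbing chain: `0` at the absorbing state. -/
def rbar (r : S → A → ℝ) : Option S → A → ℝ
  | some s, a => r s a
  | none, _ => 0

/-- Extension of a function on `S × A` to the augmented state space, by `0` at the
absorbing state (the class `Q-cal`). -/
def ext0 (Q : S → A → ℝ) : Option S → A → ℝ
  | some s, a => Q s a
  | none, _ => 0

/-- Extension of a deterministic Markov policy to the augmented state space. -/
def extPolicy [Nonempty A] (π : S → A) : Option S → A
  | some s => π s
  | none => Classical.arbitrary A

/-- The absorption time of a realized disturbance path of the absorbing chain: the first
time at which the chain is absorbed (equivalently, the first `n` such that one of the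
survival coins among `d 0, …, d (n-1)` has failed). -/
def absTime (d : ℕ → Bool × W) : ℕ := sInf {n | ∃ i < n, (d i).1 = false}

/-- A canonical greedy policy for an action-value function `φ`. -/
def greedy {S' : Type*} [Fintype A] [Nonempty A] (φ : S' → A → ℝ) (s : S') : A :=
  Classical.choose (Finite.exists_max (φ s))

/-- The upper-bound inner dynamic program: `innerU h g w t m s a` is the (perfect
information relaxation) value at time `t` with `m` periods remaining, per-period reward
`g` (reward minus penalty), realized disturbance path `w` and transition function `h`;
the terminal value is `0` and the continuation is maximized over actions. -/
def innerU {S' D : Type*} [Fintype A] [Nonempty A] (h : S' → A → D → S')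
    (g : ℕ → S' → A → ℝ) (w : ℕ → D) : ℕ → ℕ → S' → A → ℝ
  | _, 0, _, _ => 0
  | t, m + 1, s, a => g t s a + ⨆ a' : A, innerU h g w (t + 1) m (h s a (w t)) a'

/-- The lower-bound inner dynamic program: as `innerU`, but the continuation action is
chosen by the policy `π`. -/
def innerL {S' D : Type*} (h : S' → A → D → S') (π : S' → A)
    (g : ℕ → S' → A → ℝ) (w : ℕ → D) : ℕ → ℕ → S' → A → ℝ
  | _, 0, _, _ => 0
  | t, m + 1, s, a =>
      g t s a + innerL h π g w (t + 1) m (h s a (w t)) (π (h s a (w t)))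

/-- The empirical (batch) penalty `ζ-hat_t^π(s, a, w_{t+1} | φ)`, where the conditional
expectation is estimated by the sample average over a batch of `K` disturbances. -/
def penB (f : S → A → W → S) (K : ℕ) (φ : Option S → A → ℝ) (π : Option S → A)
    (path : ℕ → Bool × W) (batch : ℕ → Option S → A → Fin K → Bool × W)
    (t : ℕ) (s : Option S) (a : A) : ℝ :=
  φ (habs f s a (path t)) (π (habs f s a (path t))) -
    (K : ℝ)⁻¹ * ∑ k : Fin K,
      φ (habs f s a (batch t s a k)) (π (habs f s a (batch t s a k)))

/-- The exact penalty `ζ_t^π(s, a, w_{t+1} | φ)`, where the expectation is taken with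
respect to the distribution `νa` of the absorbing-chain disturbance. -/
def penE [MeasurableSpace W] (f : S → A → W → S) (νa : Measure (Bool × W))
    (φ : Option S → A → ℝ) (π : Option S → A) (path : ℕ → Bool × W)
    (t : ℕ) (s : Option S) (a : A) : ℝ :=
  φ (habs f s a (path t)) (π (habs f s a (path t))) -
    ∫ d, φ (habs f s a d) (π (habs f s a d)) ∂νa

/-- The experience-replay penalty `ζ-tilde_t^π(s, a, w_{t+1} | φ)`: the expectation is
taken with the `W`-component distributed according to `phat` and an independent
Bernoulli(γ) survival coin. -/
def penR [Fintype W] (f : S → A → W → S) (γ : ℝ) (phat : W → ℝ)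
    (φ : Option S → A → ℝ) (π : Option S → A) (path : ℕ → Bool × W)
    (t : ℕ) (s : Option S) (a : A) : ℝ :=
  φ (habs f s a (path t)) (π (habs f s a (path t))) -
    ∑ x : W, phat x *
      (γ * φ (habs f s a (true, x)) (π (habs f s a (true, x))) +
        (1 - γ) * φ (habs f s a (false, x)) (π (habs f s a (false, x))))

/-- Empirical distribution of the first `n+1` observed disturbances `wn 0, …, wn n`. -/
def empDist [DecidableEq W] (wn : ℕ → W) (n : ℕ) (x : W) : ℝ :=
  (((Finset.range (n + 1)).filter fun i => wn i = x).card : ℝ) / (n + 1)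

/-- Finite geometric sum `∑_{i=0}^{m-1} γ^i`. -/
def Gsum (γ : ℝ) (m : ℕ) : ℝ := ∑ i ∈ Finset.range m, γ ^ i

/-- A realization of the LBQL algorithm: the visited states `sn`, chosen actions `an`,
observed disturbances `wn`, stepsizes, iterates `Q, Q', L, U`, the inner sample paths
`path n` (of realized length `tau n`), the greedy policies `pol n` for `φ = Q_{n+1}` and
the realized penalty values `pen n` (common to the upper- and lower-bound inner
problems), together with the LBQL update equations. -/
structure Run [Fintype A] [Nonempty A]
    (f : S → A → W → S) (r : S → A → ℝ) (γ ρ : ℝ) where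
  sn : ℕ → S
  an : ℕ → A
  wn : ℕ → W
  alpha : ℕ → S → A → ℝ
  beta : ℕ → S → A → ℝ
  Q : ℕ → S → A → ℝ
  Q' : ℕ → S → A → ℝ
  L : ℕ → S → A → ℝ
  U : ℕ → S → A → ℝ
  path : ℕ → ℕ → Bool × W
  tau : ℕ → ℕ
  pol : ℕ → Option S → A
  pen : ℕ → ℕ → Option S → A → ℝ
  hs : ∀ n, sn (n + 1) = f (sn n) (an n) (wn n)
  halpha : ∀ n s a, 0 ≤ alpha n s a ∧ alpha n s a ≤ 1
  hbeta : ∀ n s a, 0 ≤ beta n s a ∧ beta n s a ≤ 1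
  htau : ∀ n, tau n = absTime (path n)
  hpol : ∀ n s' a', ext0 (Q (n + 1)) s' a' ≤ ext0 (Q (n + 1)) s' (pol n s')
  hQ'0 : ∀ s a, Q' 0 s a = Q 0 s a
  hQon : ∀ n, Q (n + 1) (sn n) (an n) = Q' n (sn n) (an n) + alpha n (sn n) (an n) *
      (r (sn n) (an n) + γ * (⨆ a' : A, Q' n (sn (n + 1)) a') - Q' n (sn n) (an n))
  hQoff : ∀ n s a, ¬(s = sn n ∧ a = an n) → Q (n + 1) s a = Q' n s a
  hUon : ∀ n, U (n + 1) (sn n) (an n) = max (-ρ) (U n (sn n) (an n) +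
      beta n (sn n) (an n) *
        (innerU (habs f) (fun t s' a' => rbar r s' a' - pen n t s' a') (path n) 0 (tau n)
            (some (sn n)) (an n) -
          U n (sn n) (an n)))
  hUoff : ∀ n s a, ¬(s = sn n ∧ a = an n) → U (n + 1) s a = U n s a
  hLon : ∀ n, L (n + 1) (sn n) (an n) = min ρ (L n (sn n) (an n) +
      beta n (sn n) (an n) *
        (innerL (habs f) (pol n) (fun t s' a' => rbar r s' a' - pen n t s' a') (path n) 0
            (tau n) (some (sn n)) (an n) -
          L n (sn n) (an n)))
  hLoff : ∀ n s a, ¬(s = sn n ∧ a = an n) → L (n + 1) s a = L n s a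
  hQ'on : ∀ n, Q' (n + 1) (sn n) (an n) = max (L (n + 1) (sn n) (an n))
      (min (U (n + 1) (sn n) (an n)) (Q (n + 1) (sn n) (an n)))
  hQ'off : ∀ n s a, ¬(s = sn n ∧ a = an n) → Q' (n + 1) s a = Q (n + 1) s a


/-- Index type for the noise random variables of the idealized LBQL algorithm: the
observed disturbances (indexed by the iteration `n`), the inner sample-path disturbances
(indexed by `(n, t)`), and the batch disturbances (indexed by
`(n, t, s, a, k)`, a fresh batch at each evaluation of the penalty). -/
abbrev NzIdx (S' A' : Type*) (K : ℕ) : Type _ :=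
  ℕ ⊕ ((ℕ × ℕ) ⊕ (ℕ × ℕ × Option S' × A' × Fin K))

/-- Codomain of each noise variable: `W` for the observed disturbances, `Bool × W`
(survival coin together with a disturbance) for the absorbing-chain disturbances. -/
def NzTy (W' : Type*) {S' A' : Type*} {K : ℕ} : NzIdx S' A' K → Type _
  | .inl _ => W'
  | .inr _ => Bool × W'

/-- The measurable-space structure on the codomain of each noise variable. -/
def nzms (W' : Type*) [MeasurableSpace W'] {S' A' : Type*} {K : ℕ} :
    ∀ j : NzIdx S' A' K, MeasurableSpace (NzTy W' j)
  | .inl _ => (inferInstance : MeasurableSpace W')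
  | .inr _ => (inferInstance : MeasurableSpace (Bool × W'))

/-- The family of noise random variables, assembled from the observed disturbances `wn`,
the inner sample paths `path` and the batches `batch`. -/
def nzfun {Ω W' S' A' : Type*} {K : ℕ} (wn : ℕ → Ω → W')
    (path : ℕ → ℕ → Ω → Bool × W')
    (batch : ℕ → ℕ → Option S' → A' → Fin K → Ω → Bool × W') :
    ∀ j : NzIdx S' A' K, Ω → NzTy W' j
  | .inl n => wn n
  | .inr (.inl (n, t)) => path n t
  | .inr (.inr (n, t, s, a, k)) => batch n t s a k

/-- The iteration (stage) at which a given noise variable is used. -/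
def nzStage {S' A' : Type*} {K : ℕ} : NzIdx S' A' K → ℕ
  | .inl n => n
  | .inr (.inl (n, _)) => n
  | .inr (.inr (n, _, _, _, _)) => n

/-- Index type for the noise of the LBQL algorithm with exact penalties (no batches). -/
abbrev NzIdxE : Type := ℕ ⊕ (ℕ × ℕ)

def NzTyE (W' : Type*) : NzIdxE → Type _
  | .inl _ => W'
  | .inr _ => Bool × W'

def nzmsE (W' : Type*) [MeasurableSpace W'] : ∀ j : NzIdxE, MeasurableSpace (NzTyE W' j)
  | .inl _ => (inferInstance : MeasurableSpace W')
  | .inr _ => (inferInstance : MeasurableSpace (Bool × W'))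

def nzfunE {Ω W' : Type*} (wn : ℕ → Ω → W') (path : ℕ → ℕ → Ω → Bool × W') :
    ∀ j : NzIdxE, Ω → NzTyE W' j
  | .inl n => wn n
  | .inr (n, t) => path n t

def nzStageE : NzIdxE → ℕ
  | .inl n => n
  | .inr (n, _) => n

/-- Index type for the noise of the experience-replay LBQL algorithm: observed
disturbances, the survival coins of the inner sample paths, and the uniformly random
buffer indices used to draw the inner sample paths from the replay buffer. -/
abbrev NzIdxR : Type := ℕ ⊕ ((ℕ × ℕ) ⊕ (ℕ × ℕ))

def NzTyR (W' : Type) : NzIdxR → Type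
  | .inl _ => W'
  | .inr (.inl _) => Bool
  | .inr (.inr _) => ℕ

def nzmsR (W' : Type) [MeasurableSpace W'] : ∀ j : NzIdxR, MeasurableSpace (NzTyR W' j)
  | .inl _ => (inferInstance : MeasurableSpace W')
  | .inr (.inl _) => (inferInstance : MeasurableSpace Bool)
  | .inr (.inr _) => (inferInstance : MeasurableSpace ℕ)

def nzfunR {Ω : Type*} {W' : Type} (wn : ℕ → Ω → W') (coin : ℕ → ℕ → Ω → Bool)
    (idx : ℕ → ℕ → Ω → ℕ) : ∀ j : NzIdxR, Ω → NzTyR W' j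
  | .inl n => wn n
  | .inr (.inl (n, t)) => coin n t
  | .inr (.inr (n, t)) => idx n t

def nzStageR : NzIdxR → ℕ
  | .inl n => n
  | .inr (.inl (n, _)) => n
  | .inr (.inr (n, _)) => n

/-- `LbarGen γ M Ut n` is the lower envelope
`min { Ut (n-1) (1+γ), …, Ut 1 (1+γ+⋯+γ^{n-1}), -M (1+γ+⋯+γ^n) }`. -/
def LbarGen (γ M : ℝ) (Ut : ℕ → ℝ) (n : ℕ) : ℝ :=
  (insert 0 (Finset.Ico 1 n)).inf' (Finset.insert_nonempty _ _)
    (fun j => if j = 0 then -M * Gsum γ (n + 1) else Ut j * Gsum γ (n - j + 1))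

/-- `UbarGen γ M Lt n` is the upper envelope
`max { Lt (n-1) (1+γ), …, Lt 1 (1+γ+⋯+γ^{n-1}), M (1+γ+⋯+γ^n) }`. -/
def UbarGen (γ M : ℝ) (Lt : ℕ → ℝ) (n : ℕ) : ℝ :=
  (insert 0 (Finset.Ico 1 n)).sup' (Finset.insert_nonempty _ _)
    (fun j => if j = 0 then M * Gsum γ (n + 1) else Lt j * Gsum γ (n - j + 1))

/-- As `LbarGen`, additionally including the term `Ut n` (note `Gsum γ 1 = 1`). -/
def Lbar'Gen (γ M : ℝ) (Ut : ℕ → ℝ) (n : ℕ) : ℝ :=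
  (insert 0 (Finset.Icc 1 n)).inf' (Finset.insert_nonempty _ _)
    (fun j => if j = 0 then -M * Gsum γ (n + 1) else Ut j * Gsum γ (n - j + 1))

/-- As `UbarGen`, additionally including the term `Lt n`. -/
def Ubar'Gen (γ M : ℝ) (Lt : ℕ → ℝ) (n : ℕ) : ℝ :=
  (insert 0 (Finset.Icc 1 n)).sup' (Finset.insert_nonempty _ _)
    (fun j => if j = 0 then M * Gsum γ (n + 1) else Lt j * Gsum γ (n - j + 1))

end

end LBQL

open LBQL

/-!
The state–action pair `(s_t, a_t)` is a function of the past disturbances `w 0, …, w (t-1)`,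
hence independent of `w t`. Integrating first in `w t` (Fubini on the product law) shows that
the `t`-th penalty term, a centred function of `w t` with `(s_t, a_t)` frozen, has mean zero.
Every term is bounded by `2 C γ^(t+1)`, which gives absolute convergence and lets the
expectation be taken term by term.
-/

section Independence

variable {Ω α β : Type*} [MeasurableSpace Ω] [MeasurableSpace α] [MeasurableSpace β]
  {μ : Measure Ω}

theorem abs_sub_integral_le {ν : Measure β} [IsProbabilityMeasure ν] {g : β → ℝ} {C : ℝ}
    (hg : ∀ b, |g b| ≤ C) (b : β) : |g b - ∫ y, g y ∂ν| ≤ 2 * C := by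
  have hint : |∫ y, g y ∂ν| ≤ C := by
    simpa using norm_integral_le_of_norm_le_const (μ := ν) (f := g) (ae_of_all _ hg)
  calc |g b - ∫ y, g y ∂ν| ≤ |g b| + |∫ y, g y ∂ν| := abs_sub _ _
    _ ≤ 2 * C := by linarith [hg b]

theorem ProbabilityTheory.IndepFun.integral_comp_eq_zero [IsFiniteMeasure μ]
    {X : Ω → α} {Y : Ω → β} (hXY : IndepFun X Y μ) (hX : Measurable X) (hY : Measurable Y)
    {H : α → β → ℝ} (hH : Measurable (Function.uncurry H)) {C : ℝ} (hHC : ∀ a b, |H a b| ≤ C)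
    (hH0 : ∀ a, ∫ b, H a b ∂(μ.map Y) = 0) :
    ∫ ω, H (X ω) (Y ω) ∂μ = 0 := by
  have hint : Integrable (Function.uncurry H) ((μ.map X).prod (μ.map Y)) :=
    .of_bound hH.aestronglyMeasurable C (ae_of_all _ fun p => hHC p.1 p.2)
  calc ∫ ω, H (X ω) (Y ω) ∂μ = ∫ p, Function.uncurry H p ∂(μ.map fun ω => (X ω, Y ω)) :=
        (integral_map (hX.prodMk hY).aemeasurable hH.aestronglyMeasurable).symm
    _ = ∫ a, ∫ b, H a b ∂(μ.map Y) ∂(μ.map X) := by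
        rw [hXY.map_prod_eq_prod_map_map hX.aemeasurable hY.aemeasurable, integral_prod _ hint]
        rfl
    _ = 0 := by simp [hH0]

theorem integral_tsum_of_abs_le [IsFiniteMeasure μ] {F : ℕ → Ω → ℝ} {c : ℕ → ℝ}
    (hF : ∀ t, AEStronglyMeasurable (F t) μ) (hFc : ∀ t ω, |F t ω| ≤ c t) (hc : Summable c) :
    ∫ ω, ∑' t, F t ω ∂μ = ∑' t, ∫ ω, F t ω ∂μ := by
  have hint : ∀ t, Integrable (F t) μ := fun t => .of_bound (hF t) (c t) (ae_of_all _ (hFc t))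
  refine (integral_tsum_of_summable_integral_norm hint ?_).symm
  refine (hc.mul_left (μ.real Set.univ)).of_nonneg_of_le
    (fun t => integral_nonneg fun ω => norm_nonneg _) fun t => ?_
  calc ∫ ω, ‖F t ω‖ ∂μ ≤ ∫ _, c t ∂μ := integral_mono (hint t).norm (integrable_const _) (hFc t)
    _ = μ.real Set.univ * c t := by simp

end Independence

namespace LBQL

variable {S A W Ω : Type*} {w : ℕ → Ω → W}

def pastNoise (w : ℕ → Ω → W) (t : ℕ) (ω : Ω) : Finset.range t → W := fun i => w i ω

theorem factorsThrough_pastNoise {f : S → A → W → S} {s₀ : S} {act : ℕ → Ω → A}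
    {st : ℕ → Ω → S}
    (hadapt : ∀ t ω ω', (∀ i, i < t → w i ω = w i ω') → act t ω = act t ω')
    (hst0 : ∀ ω, st 0 ω = s₀) (hst : ∀ t ω, st (t + 1) ω = f (st t ω) (act t ω) (w t ω))
    (t : ℕ) : Function.FactorsThrough (fun ω => (st t ω, act t ω)) (pastNoise w t) := by
  have hst_eq : ∀ t ω ω', (∀ i, i < t → w i ω = w i ω') → st t ω = st t ω' := by
    intro t
    induction t with
    | zero => intro ω ω' _; rw [hst0, hst0]
    | succ k ih =>
      intro ω ω' h
      have h' : ∀ i, i < k → w i ω = w i ω' := fun i hi => h i (hi.trans k.lt_succ_self)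
      rw [hst, hst, ih ω ω' h', hadapt k ω ω' h', h k k.lt_succ_self]
  intro ω ω' h
  have hw : ∀ i, i < t → w i ω = w i ω' := fun i hi => congrFun h ⟨i, Finset.mem_range.2 hi⟩
  simp only [Prod.mk.injEq]
  exact ⟨hst_eq t ω ω' hw, hadapt t ω ω' hw⟩

variable [MeasurableSpace W] [MeasurableSpace Ω] {μ : Measure Ω}

theorem measurable_pastNoise (hw : ∀ t, Measurable (w t)) (t : ℕ) :
    Measurable (pastNoise w t) :=
  measurable_pi_lambda _ fun i => hw i

theorem indepFun_pastNoise (hind : iIndepFun w μ) (hw : ∀ t, Measurable (w t)) (t : ℕ) :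
    IndepFun (pastNoise w t) (w t) μ :=
  (hind.indepFun_finset (Finset.range t) {t} (by simp) hw).comp measurable_id
    (measurable_pi_apply (⟨t, Finset.mem_singleton_self t⟩ : ({t} : Finset ℕ)))

theorem integrable_centered_and_integral_eq_zero [IsProbabilityMeasure μ] [Countable W]
    [MeasurableSingletonClass W] (hind : iIndepFun w μ) (hw : ∀ t, Measurable (w t))
    {γ : Type*} {p : Ω → γ} {t : ℕ} (hp : Function.FactorsThrough p (pastNoise w t))
    {G : γ → W → ℝ} {C : ℝ} (hG : ∀ c x, |G c x| ≤ C) :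
    Integrable (fun ω => G (p ω) (w t ω) - ∫ x, G (p ω) x ∂(μ.map (w t))) μ ∧
      ∫ ω, (G (p ω) (w t ω) - ∫ x, G (p ω) x ∂(μ.map (w t))) ∂μ = 0 := by
  have := nonempty_of_isProbabilityMeasure μ
  have : Nonempty γ := ⟨p (Classical.arbitrary Ω)⟩
  obtain ⟨e, rfl⟩ := (Function.factorsThrough_iff p).1 hp
  have : IsProbabilityMeasure (μ.map (w t)) :=
    Measure.isProbabilityMeasure_map (hw t).aemeasurable
  set H : (Finset.range t → W) → W → ℝ := fun a b => G (e a) b - ∫ x, G (e a) x ∂(μ.map (w t))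
  have hH : Measurable (Function.uncurry H) := measurable_of_countable _
  have hHC : ∀ a b, |H a b| ≤ 2 * C := fun a b => abs_sub_integral_le (hG (e a)) b
  refine ⟨.of_bound (hH.comp ((measurable_pastNoise hw t).prodMk (hw t))).aestronglyMeasurable
    (2 * C) (ae_of_all _ fun ω => hHC _ _), ?_⟩
  refine (indepFun_pastNoise hind hw t).integral_comp_eq_zero (measurable_pastNoise hw t) (hw t)
    hH hHC fun a => ?_
  have hGint : Integrable (G (e a)) (μ.map (w t)) :=
    .of_bound (measurable_of_countable _).aestronglyMeasurable C (ae_of_all _ (hG (e a)))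
  simp [H, integral_sub hGint (integrable_const _)]

end LBQL

theorem statement0_general
    {S A W Ω : Type*} [Fintype W]
    [MeasurableSpace W] [MeasurableSingletonClass W]
    [MeasurableSpace Ω]
    (μ : Measure Ω) [IsProbabilityMeasure μ]
    (ν : Measure W) [IsProbabilityMeasure ν]
    (w : ℕ → Ω → W)
    (hwmeas : ∀ t, Measurable (w t))
    (hwindep : iIndepFun w μ)
    (hwdist : ∀ t, μ.map (w t) = ν)
    (f : S → A → W → S)
    (γ : ℝ) (hγ0 : 0 < γ) (hγ1 : γ < 1)
    (φ : S → A → ℝ) (C : ℝ) (hφ : ∀ s a, |φ s a| ≤ C)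
    (π : S → A)
    (s₀ : S)
    (act : ℕ → Ω → A) (st : ℕ → Ω → S)
    (hadapt : ∀ t ω ω', (∀ i, i < t → w i ω = w i ω') → act t ω = act t ω')
    (hst0 : ∀ ω, st 0 ω = s₀)
    (hst : ∀ t ω, st (t + 1) ω = f (st t ω) (act t ω) (w t ω)) :
    (∀ᵐ ω ∂μ, Summable fun t =>
        |γ ^ (t + 1) * (φ (st (t + 1) ω) (π (st (t + 1) ω)) -
            ∫ x, φ (f (st t ω) (act t ω) x) (π (f (st t ω) (act t ω) x)) ∂ν)|) ∧
      ∫ ω, (∑' t, γ ^ (t + 1) * (φ (st (t + 1) ω) (π (st (t + 1) ω)) -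
            ∫ x, φ (f (st t ω) (act t ω) x) (π (f (st t ω) (act t ω) x)) ∂ν)) ∂μ = 0 := by
  set G : S × A → W → ℝ := fun p x => φ (f p.1 p.2 x) (π (f p.1 p.2 x))
  have hG : ∀ p x, |G p x| ≤ C := fun p x => hφ _ _
  have hterm := fun t => integrable_centered_and_integral_eq_zero hwindep hwmeas
    (factorsThrough_pastNoise hadapt hst0 hst t) hG
  simp only [hwdist] at hterm
  have hbound : ∀ t ω, |γ ^ (t + 1) * (G (st t ω, act t ω) (w t ω) -
      ∫ x, G (st t ω, act t ω) x ∂ν)| ≤ 2 * C * γ ^ (t + 1) := fun t ω => by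
    rw [abs_mul, abs_of_pos (pow_pos hγ0 _), mul_comm]
    exact mul_le_mul_of_nonneg_right (abs_sub_integral_le (hG _) _) (pow_pos hγ0 _).le
  have hgeom : Summable fun t : ℕ => 2 * C * γ ^ (t + 1) :=
    (summable_geometric_of_lt_one hγ0.le hγ1).mul_left (2 * C * γ) |>.congr fun t => by ring
  simp only [hst]
  refine ⟨ae_of_all _ fun ω => hgeom.of_nonneg_of_le (fun t => abs_nonneg _) (hbound · ω), ?_⟩
  rw [integral_tsum_of_abs_le (fun t => ((hterm t).1.const_mul _).aestronglyMeasurable) hbound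
    hgeom]
  simp [integral_const_mul, (hterm _).2]

/-- **dual feasibility of the penalties.**
Fix a bounded function `φ : S × A → ℝ` and a deterministic Markov policy `π : S → A`.
Let the actions `act` be generated by any non-anticipative (admissible) policy (so `act t`
depends only on the disturbances `w_1, …, w_t`, i.e. on `w 0, …, w (t-1)`), with states
`s_{t+1} = f (s_t, a_t, w_{t+1})` started from an arbitrary initial pair `(s₀, a₀)`, and
consider the penalty terms
`z_t = γ^(t+1) * (φ (s_{t+1}, π s_{t+1}) - E_{w ~ ν} [φ (f (s_t, a_t, w), π (f (s_t, a_t, w)))])`.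
Then the penalty is dual feasible: the series `∑_t z_t` converges absolutely almost
surely, and `E [∑_t z_t] = 0`. -/
theorem statement0
    {S A W Ω : Type*} [Fintype S] [Fintype A] [Fintype W]
    [Nonempty S] [Nonempty A] [Nonempty W]
    [MeasurableSpace A] [MeasurableSingletonClass A]
    [MeasurableSpace W] [MeasurableSingletonClass W]
    [MeasurableSpace Ω]
    (μ : Measure Ω) [IsProbabilityMeasure μ]
    (ν : Measure W) [IsProbabilityMeasure ν]
    (w : ℕ → Ω → W)
    (hwmeas : ∀ t, Measurable (w t))
    (hwindep : iIndepFun w μ)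
    (hwdist : ∀ t, μ.map (w t) = ν)
    (f : S → A → W → S) (r : S → A → ℝ) (Rmax : ℝ)
    (hr : ∀ s a, |r s a| ≤ Rmax)
    (γ : ℝ) (hγ0 : 0 < γ) (hγ1 : γ < 1)
    (φ : S → A → ℝ) (C : ℝ) (hφ : ∀ s a, |φ s a| ≤ C)
    (π : S → A)
    (s₀ : S) (a₀ : A)
    (act : ℕ → Ω → A) (st : ℕ → Ω → S)
    (hactmeas : ∀ t, Measurable (act t))
    (hact0 : ∀ ω, act 0 ω = a₀)
    (hadapt : ∀ t ω ω', (∀ i, i < t → w i ω = w i ω') → act t ω = act t ω')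
    (hst0 : ∀ ω, st 0 ω = s₀)
    (hst : ∀ t ω, st (t + 1) ω = f (st t ω) (act t ω) (w t ω)) :
    (∀ᵐ ω ∂μ, Summable fun t =>
        |γ ^ (t + 1) * (φ (st (t + 1) ω) (π (st (t + 1) ω)) -
            ∫ x, φ (f (st t ω) (act t ω) x) (π (f (st t ω) (act t ω) x)) ∂ν)|) ∧
      ∫ ω, (∑' t, γ ^ (t + 1) * (φ (st (t + 1) ω) (π (st (t + 1) ω)) -
            ∫ x, φ (f (st t ω) (act t ω) x) (π (f (st t ω) (act t ω) x)) ∂ν)) ∂μ = 0 :=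
  statement0_general μ ν w hwmeas hwindep hwdist f γ hγ0 hγ1 φ C hφ π s₀ act st hadapt hst0 hst
end

section
/- For every deterministic Markov policy pi, every phi in Q-cal, and every state-action pair (s,a): E[ sum_{t=0}^{tau-1} zeta_t^pi(s_t, a_t, w_{t+1} | phi) ] = 0 along the absorbing-chain trajectory generated by pi from (s_0, a_0) = (s, a); consequently, the value of the lower-bound inner DP computed with the exact penalties satisfies E[ Q^L_0(s,a) ] = Q^pi(s,a). -/
open MeasureTheory ProbabilityTheory Filter

open LBQL

/-!
The state-action pair `(s_t, a_t)` of the absorbing chain is a function of the first `t`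
disturbances, and by independence the law of the first `n` disturbances is the product measure.
Since `w_{t+1}` is independent of the first `t` disturbances and has law `νa`, integrating it out
first shows that every penalty `ζ_t` has mean zero. The chain is alive at time `t` exactly when
the first `t` survival coins succeed; under the product measure these coins are independent of the
`W`-components, so `E[r̄(s_t, a_t)] = γ ^ t E[r(s_t, a_t)]`, the latter along the original chain.
All summands vanish after absorption and are bounded by a constant times the survival indicator,
whose mean is `γ ^ t`; so `τ < ∞` almost surely and the random sum up to `τ` may be exchanged
with the expectation, which gives `E[∑ ζ_t] = 0` and `E[Q^L_0] = ∑ γ ^ t E[r(s_t, a_t)] = Q^π`.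
-/

open MeasureTheory ProbabilityTheory

theorem DependsOn.comp {ι : Type*} {α : ι → Type*} {β γ : Type*} {f : (Π i, α i) → β}
    {s : Set ι} (hf : DependsOn f s) (g : β → γ) : DependsOn (fun x => g (f x)) s :=
  fun _ _ h => congrArg g (hf h)

section FiniteDimensionalLaws

variable {Ω D : Type*}

theorem ProbabilityTheory.iIndepFun.map_fin_eq_pi [MeasurableSpace Ω] [MeasurableSpace D]
    {μ : Measure Ω} {ξ : ℕ → Ω → D} {κ : Measure D} (hξ : ∀ i, Measurable (ξ i))
    (hind : iIndepFun ξ μ) (hlaw : ∀ i, μ.map (ξ i) = κ) (n : ℕ) :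
    μ.map (fun ω (i : Fin n) => ξ i ω) = Measure.pi fun _ => κ := by
  rw [iIndepFun.map_fun_eq_pi_map (f := fun i : Fin n => ξ i) (fun i => (hξ i).aemeasurable)
    (hind.precomp Fin.val_injective)]
  simp only [hlaw]

variable [Nonempty D]

noncomputable def extendFin {n : ℕ} (v : Fin n → D) : ℕ → D :=
  Function.extend Fin.val v fun _ => Classical.arbitrary D

theorem extendFin_apply_fin {n : ℕ} (v : Fin n → D) (i : Fin n) : extendFin v i = v i :=
  Fin.val_injective.extend_apply _ _ i

theorem extendFin_snoc_of_lt {t : ℕ} (u : Fin t → D) (d : D) {i : ℕ} (hi : i < t) :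
    extendFin (Fin.snoc u d : Fin (t + 1) → D) i = extendFin u i := by
  rw [extendFin_apply_fin (Fin.snoc u d : Fin (t + 1) → D) ⟨i, by omega⟩,
    extendFin_apply_fin u ⟨i, hi⟩]
  exact Fin.snoc_castSucc (α := fun _ => D) (i := ⟨i, hi⟩) ..

theorem extendFin_snoc_self {t : ℕ} (u : Fin t → D) (d : D) :
    extendFin (Fin.snoc u d : Fin (t + 1) → D) t = d := by
  simpa using extendFin_apply_fin (Fin.snoc u d : Fin (t + 1) → D) (Fin.last t)

theorem DependsOn.comp_eq_comp_extendFin {β : Type*} {G : (ℕ → D) → β} {n : ℕ}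
    (hG : DependsOn G (Set.Iio n)) (ξ : ℕ → Ω → D) :
    (fun ω => G fun i => ξ i ω) = (G ∘ extendFin) ∘ fun ω (i : Fin n) => ξ i ω :=
  funext fun _ => (hG fun i hi => extendFin_apply_fin _ (⟨i, hi⟩ : Fin n)).symm

variable [MeasurableSpace Ω] [MeasurableSpace D] [Finite D] [MeasurableSingletonClass D]
  {μ : Measure Ω} {ξ : ℕ → Ω → D} {κ : Measure D}

theorem DependsOn.integrable_comp [IsFiniteMeasure μ] {G : (ℕ → D) → ℝ} {n : ℕ}
    (hG : DependsOn G (Set.Iio n)) (hξ : ∀ i, Measurable (ξ i)) :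
    Integrable (fun ω => G fun i => ξ i ω) μ := by
  rw [hG.comp_eq_comp_extendFin]
  exact Integrable.of_finite.comp_measurable (measurable_pi_lambda _ fun i => hξ i)

theorem integral_comp_eq_integral_pi (hξ : ∀ i, Measurable (ξ i)) (hind : iIndepFun ξ μ)
    (hlaw : ∀ i, μ.map (ξ i) = κ) {G : (ℕ → D) → ℝ} {n : ℕ} (hG : DependsOn G (Set.Iio n)) :
    ∫ ω, G (fun i => ξ i ω) ∂μ = ∫ v, G (extendFin v) ∂Measure.pi fun _ : Fin n => κ := by
  rw [hG.comp_eq_comp_extendFin, ← hind.map_fin_eq_pi hξ hlaw,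
    integral_map (measurable_pi_lambda (fun ω (i : Fin n) => ξ i ω) fun i => hξ i).aemeasurable
      (measurable_of_countable _).aestronglyMeasurable]
  rfl

theorem integral_comp_apply_eq_integral_integral [IsProbabilityMeasure κ]
    (hξ : ∀ i, Measurable (ξ i)) (hind : iIndepFun ξ μ) (hlaw : ∀ i, μ.map (ξ i) = κ)
    {α : Type*} {X : (ℕ → D) → α} {t : ℕ} (hX : DependsOn X (Set.Iio t)) (g : α → D → ℝ) :
    ∫ ω, g (X fun i => ξ i ω) (ξ t ω) ∂μ = ∫ ω, ∫ d, g (X fun i => ξ i ω) d ∂κ ∂μ := by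
  have hX' : DependsOn X (Set.Iio (t + 1)) := hX.mono (Set.Iio_subset_Iio t.le_succ)
  have hnow : DependsOn (fun w => g (X w) (w t)) (Set.Iio (t + 1)) := fun w w' h => by
    simp only [hX' h, h t t.lt_succ_self]
  have hfrozen : DependsOn (fun w => ∫ d, g (X w) d ∂κ) (Set.Iio (t + 1)) :=
    hX'.comp fun x => ∫ d, g x d ∂κ
  have hsnoc : ∀ u d, X (extendFin (Fin.snoc u d : Fin (t + 1) → D)) = X (extendFin u) :=
    fun u d => hX fun i hi => extendFin_snoc_of_lt u d hi
  have hsplit : ∀ (u : Fin t → D) d,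
      (MeasurableEquiv.piFinSuccAbove (fun _ => D) (Fin.last t)).symm (d, u) = Fin.snoc u d :=
    fun u d => Fin.insertNth_last' d u
  have e := (measurePreserving_piFinSuccAbove (fun _ : Fin (t + 1) => κ) (Fin.last t)).symm
  rw [integral_comp_eq_integral_pi hξ hind hlaw hnow,
    integral_comp_eq_integral_pi hξ hind hlaw hfrozen, ← e.integral_comp', ← e.integral_comp',
    integral_prod_symm _ Integrable.of_finite, integral_prod_symm _ Integrable.of_finite]
  simp [hsplit, hsnoc, extendFin_snoc_self]

end FiniteDimensionalLaws

section ProductMeasures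

open scoped ENNReal

variable {α β : Type*} [MeasurableSpace α] [MeasurableSpace β]

theorem MeasureTheory.Measure.map_fst_apply_singleton_of_apply_singleton [Fintype α]
    [Fintype β] [MeasurableSingletonClass α] [MeasurableSingletonClass β] {ρ : Measure (α × β)}
    {ν : Measure β} [IsProbabilityMeasure ν] {c : α → ℝ≥0∞}
    (hρ : ∀ a b, ρ {(a, b)} = c a * ν {b}) (a : α) :
    ρ.map Prod.fst {a} = c a := by
  classical
  have hfib : Prod.fst ⁻¹' {a} = ((Finset.univ.filter fun p : α × β => p.1 = a : Finset _) :
      Set (α × β)) := by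
    ext; simp
  rw [Measure.map_apply measurable_fst (measurableSet_singleton a), hfib, ← sum_measure_singleton,
    Finset.sum_filter, Fintype.sum_prod_type]
  simp [hρ, ← Finset.mul_sum]

theorem MeasureTheory.Measure.eq_map_fst_prod_of_apply_singleton [Fintype α] [Fintype β]
    [MeasurableSingletonClass α] [MeasurableSingletonClass β] {ρ : Measure (α × β)}
    {ν : Measure β} [IsProbabilityMeasure ν] {c : α → ℝ≥0∞}
    (hρ : ∀ a b, ρ {(a, b)} = c a * ν {b}) :
    ρ = (ρ.map Prod.fst).prod ν := by
  refine Measure.ext_of_singleton fun ⟨a, b⟩ => ?_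
  rw [← Set.singleton_prod_singleton, Measure.prod_prod,
    Measure.map_fst_apply_singleton_of_apply_singleton hρ, Set.singleton_prod_singleton, hρ]

theorem integral_pi_prod_indicator_forall_mem {ι : Type*} [Fintype ι] (ρ : Measure α)
    (ν : Measure β) [IsProbabilityMeasure ρ] [IsProbabilityMeasure ν] {s : Set α}
    (hs : MeasurableSet s) (H : (ι → β) → ℝ) :
    ∫ v, {v : ι → α × β | ∀ i, (v i).1 ∈ s}.indicator (fun v => H fun i => (v i).2) v
        ∂Measure.pi (fun _ => ρ.prod ν)
      = ρ.real s ^ Fintype.card ι * ∫ x, H x ∂Measure.pi fun _ : ι => ν := by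
  set e := MeasurableEquiv.arrowProdEquivProdArrow α β ι
  have hsplit : ∀ v : ι → α × β,
      {v : ι → α × β | ∀ i, (v i).1 ∈ s}.indicator (fun v => H fun i => (v i).2) v
        = (Set.univ.pi fun _ => s).indicator 1 (e v).1 * H (e v).2 := by
    intro v
    have he : e v = (fun i => (v i).1, fun i => (v i).2) := rfl
    rw [he]
    by_cases hv : ∀ i, (v i).1 ∈ s
    · rw [Set.indicator_of_mem (s := {v : ι → α × β | ∀ i, (v i).1 ∈ s}) hv,
        Set.indicator_of_mem (Set.mem_univ_pi.mpr hv), Pi.one_apply, one_mul]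
    · rw [Set.indicator_of_notMem (s := {v : ι → α × β | ∀ i, (v i).1 ∈ s}) hv,
        Set.indicator_of_notMem (mt Set.mem_univ_pi.mp hv), zero_mul]
  simp_rw [hsplit]
  rw [(measurePreserving_arrowProdEquivProdArrow α β ι (fun _ => ρ) (fun _ => ν)).integral_comp'
      (g := fun z => (Set.univ.pi fun _ => s).indicator 1 z.1 * H z.2),
    integral_prod_mul, integral_indicator_one (MeasurableSet.univ_pi fun _ => hs),
    measureReal_def, Measure.pi_pi, ENNReal.toReal_prod, Finset.prod_const, Finset.card_univ,
    measureReal_def]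

end ProductMeasures

theorem MeasureTheory.integral_sum_range_sInf_eq_tsum {Ω : Type*} [MeasurableSpace Ω]
    {μ : Measure Ω} {F : ℕ → Ω → ℝ} {P : ℕ → Ω → Prop} (hP : ∀ ω, Monotone fun n => P n ω)
    (hF : ∀ t ω, P t ω → F t ω = 0) (hae : ∀ᵐ ω ∂μ, ∃ n, P n ω)
    (hint : ∀ t, Integrable (F t) μ) (hsum : Summable fun t => ∫ ω, ‖F t ω‖ ∂μ) :
    ∫ ω, ∑ t ∈ Finset.range (sInf {n | P n ω}), F t ω ∂μ = ∑' t, ∫ ω, F t ω ∂μ := by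
  rw [integral_tsum_of_summable_integral_norm hint hsum]
  refine integral_congr_ae (hae.mono fun ω hω => (tsum_eq_sum fun t ht => hF t ω ?_).symm)
  exact hP ω (not_lt.mp (Finset.mem_range.not.mp ht)) (Nat.sInf_mem hω)

namespace LBQL

variable {S A W : Type*}

theorem dependsOn_traj (f : S → A → W → S) (π : S → A) (sa : S × A) (t : ℕ) :
    DependsOn (fun w => traj f π sa w t) (Set.Iio t) := by
  induction t with
  | zero => exact fun _ _ _ => rfl
  | succ t ih =>
    intro w w' h
    have hw : traj f π sa w t = traj f π sa w' t := ih fun i hi => h i (Nat.lt_succ_of_lt hi)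
    simp only [traj, hw, h t (Nat.lt_succ_self t)]

theorem traj_succ_eq_traj_tail (f : S → A → W → S) (π : S → A) (sa : S × A) (w : ℕ → W) :
    ∀ t, traj f π sa w (t + 1) =
      traj f π (f sa.1 sa.2 (w 0), π (f sa.1 sa.2 (w 0))) (fun j => w (j + 1)) t
  | 0 => rfl
  | t + 1 => by rw [traj, traj_succ_eq_traj_tail f π sa w t]; rfl

theorem innerL_eq_sum {S' D : Type*} (h : S' → A → D → S') (p : S' → A)
    (g : ℕ → S' → A → ℝ) (w : ℕ → D) (m : ℕ) :
    ∀ t s a, innerL h p g w t m s a =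
      ∑ i ∈ Finset.range m,
        g (t + i) (traj h p (s, a) (fun j => w (t + j)) i).1
          (traj h p (s, a) (fun j => w (t + j)) i).2 := by
  induction m with
  | zero => simp [innerL]
  | succ m ih =>
    intro t s a
    rw [innerL, ih, Finset.sum_range_succ', add_comm]
    congr 1
    refine Finset.sum_congr rfl fun i _ => ?_
    rw [traj_succ_eq_traj_tail]
    simp only [Nat.add_zero, Nat.add_succ, Nat.succ_add]

section AbsorbingChain

variable [Nonempty A] (f : S → A → W → S) (π : S → A) (s : S) (a : A)

theorem traj_habs_eq_ite (w : ℕ → Bool × W) (t : ℕ) :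
    traj (habs f) (extPolicy π) (some s, a) w t =
      if ∀ i < t, (w i).1 = true then
        (some (traj f π (s, a) (fun i => (w i).2) t).1, (traj f π (s, a) (fun i => (w i).2) t).2)
      else (none, Classical.arbitrary A) := by
  induction t with
  | zero => simp [traj]
  | succ t ih =>
    rw [traj, ih]
    by_cases halive : ∀ i < t, (w i).1 = true
    · rw [if_pos halive]
      cases hcoin : (w t).1
      · have : ¬ ∀ i < t + 1, (w i).1 = true := fun h => by simp [h t t.lt_succ_self] at hcoin
        simp only [if_neg this, habs, hcoin, extPolicy, Bool.false_eq_true, if_false]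
      · have : ∀ i < t + 1, (w i).1 = true := fun i hi => by
          rcases Nat.lt_succ_iff_lt_or_eq.mp hi with hi | rfl
          exacts [halive i hi, hcoin]
        simp only [if_pos this, habs, hcoin, extPolicy, if_true]
        rfl
    · have : ¬ ∀ i < t + 1, (w i).1 = true := fun h => halive fun i hi => h i (by omega)
      simp only [if_neg halive, if_neg this, habs, extPolicy]

theorem traj_habs_fst_eq_none_iff (w : ℕ → Bool × W) (t : ℕ) :
    (traj (habs f) (extPolicy π) (some s, a) w t).1 = none ↔ ¬ ∀ i < t, (w i).1 = true := by
  rw [traj_habs_eq_ite]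
  split_ifs with h <;> simpa using h

theorem monotone_traj_habs_fst_eq_none (w : ℕ → Bool × W) :
    Monotone fun n => (traj (habs f) (extPolicy π) (some s, a) w n).1 = none := by
  intro m n hmn
  simp only [traj_habs_fst_eq_none_iff, le_Prop_eq]
  exact fun hm hn => hm fun i hi => hn i (hi.trans_le hmn)

theorem rbar_traj_habs_extendFin [Nonempty W] (g : S → A → ℝ) {t : ℕ} (v : Fin t → Bool × W) :
    rbar g (traj (habs f) (extPolicy π) (some s, a) (extendFin v) t).1
        (traj (habs f) (extPolicy π) (some s, a) (extendFin v) t).2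
      = {v : Fin t → Bool × W | ∀ i, (v i).1 ∈ ({true} : Set Bool)}.indicator
          (fun v => g (traj f π (s, a) (extendFin fun i => (v i).2) t).1
            (traj f π (s, a) (extendFin fun i => (v i).2) t).2) v := by
  set alive := {v : Fin t → Bool × W | ∀ i, (v i).1 ∈ ({true} : Set Bool)}
  have halive : (∀ i < t, (extendFin v i).1 = true) ↔ v ∈ alive := by
    simp only [alive, Set.mem_ofPred_eq, Fin.forall_iff, ← extendFin_apply_fin v,
      Set.mem_singleton_iff]
  have hpath : traj f π (s, a) (fun i => (extendFin v i).2) t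
      = traj f π (s, a) (extendFin fun i => (v i).2) t :=
    dependsOn_traj f π (s, a) t fun i hi =>
      (congrArg Prod.snd (extendFin_apply_fin v ⟨i, hi⟩)).trans
        (extendFin_apply_fin (fun i => (v i).2) ⟨i, hi⟩).symm
  rw [traj_habs_eq_ite]
  by_cases h : ∀ i < t, (extendFin v i).1 = true
  · rw [if_pos h, Set.indicator_of_mem (halive.mp h), hpath]
    rfl
  · rw [if_neg h, Set.indicator_of_notMem (mt halive.mpr h)]
    rfl

end AbsorbingChain

section Penalties

variable [MeasurableSpace W] (f : S → A → W → S) (νa : Measure (Bool × W))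
  {φ : Option S → A → ℝ}

theorem penE_none (hφ0 : ∀ a', φ none a' = 0) (p : Option S → A) (w : ℕ → Bool × W) (t : ℕ)
    (a' : A) : penE f νa φ p w t none a' = 0 := by
  simp [penE, habs, hφ0]

variable [IsProbabilityMeasure νa] {C : ℝ}

theorem abs_penE_le_rbar (hφbdd : ∀ s' a', |φ s' a'| ≤ C) (hφ0 : ∀ a', φ none a' = 0)
    (p : Option S → A) (w : ℕ → Bool × W) (t : ℕ) (s' : Option S) (a' : A) :
    |penE f νa φ p w t s' a'| ≤ rbar (fun _ _ => 2 * C) s' a' := by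
  cases s' with
  | none => simp [penE_none f νa hφ0, rbar]
  | some s' =>
    have hmean : |∫ d, φ (habs f (some s') a' d) (p (habs f (some s') a' d)) ∂νa| ≤ C := by
      simpa using norm_integral_le_of_norm_le_const (μ := νa)
        (ae_of_all _ fun d => (Real.norm_eq_abs _).trans_le (hφbdd _ _))
    have := abs_sub (φ (habs f (some s') a' (w t)) (p (habs f (some s') a' (w t))))
      (∫ d, φ (habs f (some s') a' d) (p (habs f (some s') a' d)) ∂νa)
    simp only [penE, rbar]
    linarith [hφbdd (habs f (some s') a' (w t)) (p (habs f (some s') a' (w t)))]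

theorem abs_rbar_sub_penE_le_rbar {r : S → A → ℝ} {Rmax : ℝ} (hr : ∀ s a, |r s a| ≤ Rmax)
    (hφbdd : ∀ s' a', |φ s' a'| ≤ C) (hφ0 : ∀ a', φ none a' = 0)
    (p : Option S → A) (w : ℕ → Bool × W) (t : ℕ) (s' : Option S) (a' : A) :
    |rbar r s' a' - penE f νa φ p w t s' a'| ≤ rbar (fun _ _ => Rmax + 2 * C) s' a' := by
  have hpen := abs_penE_le_rbar f νa hφbdd hφ0 p w t s' a'
  refine (abs_sub _ _).trans ?_
  cases s' with
  | none => simpa [rbar] using hpen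
  | some s' => simpa [rbar] using add_le_add (hr s' a') hpen

end Penalties

section Expectations

variable [Nonempty A] [MeasurableSpace W] [Fintype W] [MeasurableSingletonClass W] [Nonempty W]
  {Ω : Type*} [MeasurableSpace Ω] {μ : Measure Ω} {ν : Measure W} {νa : Measure (Bool × W)}
  {γ : ℝ} {dseq : ℕ → Ω → Bool × W} (f : S → A → W → S) (π : S → A) (s : S) (a : A)

theorem integrable_rbar_traj_habs [IsFiniteMeasure μ] (hdmeas : ∀ t, Measurable (dseq t))
    (g : S → A → ℝ) (t : ℕ) :
    Integrable (fun ω => rbar g (traj (habs f) (extPolicy π) (some s, a) (fun i => dseq i ω) t).1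
      (traj (habs f) (extPolicy π) (some s, a) (fun i => dseq i ω) t).2) μ :=
  ((dependsOn_traj _ _ _ t).comp fun x => rbar g x.1 x.2).integrable_comp hdmeas

theorem integrable_penE_traj_habs [IsFiniteMeasure μ] (hdmeas : ∀ t, Measurable (dseq t))
    (φ : Option S → A → ℝ) (t : ℕ) :
    Integrable (fun ω => penE f νa φ (extPolicy π) (fun i => dseq i ω) t
      (traj (habs f) (extPolicy π) (some s, a) (fun i => dseq i ω) t).1
      (traj (habs f) (extPolicy π) (some s, a) (fun i => dseq i ω) t).2) μ := by
  refine DependsOn.integrable_comp (n := t + 1) (G := fun w => penE f νa φ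
    (extPolicy π) w t (traj (habs f) (extPolicy π) (some s, a) w t).1
    (traj (habs f) (extPolicy π) (some s, a) w t).2) (fun w w' h => ?_) hdmeas
  simp only [penE, dependsOn_traj (habs f) (extPolicy π) (some s, a) t
    fun i hi => h i (Nat.lt_succ_of_lt hi), h t t.lt_succ_self]

theorem integral_penE_traj_habs [IsProbabilityMeasure νa] (hdmeas : ∀ t, Measurable (dseq t))
    (hdindep : iIndepFun dseq μ) (hddist : ∀ t, μ.map (dseq t) = νa) (φ : Option S → A → ℝ)
    (t : ℕ) :
    ∫ ω, penE f νa φ (extPolicy π) (fun i => dseq i ω) t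
      (traj (habs f) (extPolicy π) (some s, a) (fun i => dseq i ω) t).1
      (traj (habs f) (extPolicy π) (some s, a) (fun i => dseq i ω) t).2 ∂μ = 0 := by
  have := hdindep.isProbabilityMeasure
  set g : Option S × A → Bool × W → ℝ :=
    fun x d => φ (habs f x.1 x.2 d) (extPolicy π (habs f x.1 x.2 d))
  have hX := dependsOn_traj (habs f) (extPolicy π) (some s, a) t
  have hnow : Integrable (fun ω => g (traj (habs f) (extPolicy π) (some s, a)
      (fun i => dseq i ω) t) (dseq t ω)) μ := by
    refine DependsOn.integrable_comp (n := t + 1)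
      (G := fun w => g (traj (habs f) (extPolicy π) (some s, a) w t) (w t)) (fun w w' h => ?_)
      hdmeas
    simp only [hX fun i hi => h i (Nat.lt_succ_of_lt hi), h t t.lt_succ_self]
  have hfrozen : Integrable (fun ω => ∫ d, g (traj (habs f) (extPolicy π) (some s, a)
      (fun i => dseq i ω) t) d ∂νa) μ :=
    (hX.comp fun x => ∫ d, g x d ∂νa).integrable_comp hdmeas
  calc _ = ∫ ω, (g (traj (habs f) (extPolicy π) (some s, a) (fun i => dseq i ω) t) (dseq t ω) -
        ∫ d, g (traj (habs f) (extPolicy π) (some s, a) (fun i => dseq i ω) t) d ∂νa) ∂μ := rfl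
    _ = 0 := by
      rw [integral_sub hnow hfrozen,
        integral_comp_apply_eq_integral_integral hdmeas hdindep hddist hX g, sub_self]

variable [IsProbabilityMeasure ν]

theorem integral_rbar_traj_habs [IsProbabilityMeasure νa] (hγ : 0 ≤ γ)
    (hνa : ∀ (b : Bool) (x : W),
      νa {(b, x)} = (if b then ENNReal.ofReal γ else ENNReal.ofReal (1 - γ)) * ν {x})
    (hdmeas : ∀ t, Measurable (dseq t)) (hdindep : iIndepFun dseq μ)
    (hddist : ∀ t, μ.map (dseq t) = νa) (g : S → A → ℝ) (t : ℕ) :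
    ∫ ω, rbar g (traj (habs f) (extPolicy π) (some s, a) (fun i => dseq i ω) t).1
        (traj (habs f) (extPolicy π) (some s, a) (fun i => dseq i ω) t).2 ∂μ
      = γ ^ t * ∫ x, g (traj f π (s, a) (extendFin x) t).1 (traj f π (s, a) (extendFin x) t).2
          ∂Measure.pi fun _ : Fin t => ν := by
  have := Measure.isProbabilityMeasure_map (μ := νa) measurable_fst.aemeasurable
  have hcoin : (νa.map Prod.fst).real {true} = γ := by
    rw [measureReal_def, Measure.map_fst_apply_singleton_of_apply_singleton hνa, if_pos rfl,
      ENNReal.toReal_ofReal hγ]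
  rw [integral_comp_eq_integral_pi hdmeas hdindep hddist
      ((dependsOn_traj _ _ _ t).comp fun x => rbar g x.1 x.2)]
  simp only [rbar_traj_habs_extendFin]
  rw [Measure.eq_map_fst_prod_of_apply_singleton hνa, integral_pi_prod_indicator_forall_mem _ _
    (measurableSet_singleton true)
    (fun x => g (traj f π (s, a) (extendFin x) t).1 (traj f π (s, a) (extendFin x) t).2),
    hcoin, Fintype.card_fin]

theorem integral_rbar_const_traj_habs [IsProbabilityMeasure νa] (hγ : 0 ≤ γ)
    (hνa : ∀ (b : Bool) (x : W),
      νa {(b, x)} = (if b then ENNReal.ofReal γ else ENNReal.ofReal (1 - γ)) * ν {x})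
    (hdmeas : ∀ t, Measurable (dseq t)) (hdindep : iIndepFun dseq μ)
    (hddist : ∀ t, μ.map (dseq t) = νa) (K : ℝ) (t : ℕ) :
    ∫ ω, rbar (fun _ _ => K) (traj (habs f) (extPolicy π) (some s, a) (fun i => dseq i ω) t).1
        (traj (habs f) (extPolicy π) (some s, a) (fun i => dseq i ω) t).2 ∂μ = γ ^ t * K := by
  rw [integral_rbar_traj_habs f π s a hγ hνa hdmeas hdindep hddist]
  simp

theorem ae_exists_traj_habs_fst_eq_none [IsProbabilityMeasure νa] (hγ0 : 0 ≤ γ) (hγ1 : γ < 1)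
    (hνa : ∀ (b : Bool) (x : W),
      νa {(b, x)} = (if b then ENNReal.ofReal γ else ENNReal.ofReal (1 - γ)) * ν {x})
    (hdmeas : ∀ t, Measurable (dseq t)) (hdindep : iIndepFun dseq μ)
    (hddist : ∀ t, μ.map (dseq t) = νa) :
    ∀ᵐ ω ∂μ, ∃ n, (traj (habs f) (extPolicy π) (some s, a) (fun i => dseq i ω) n).1 = none := by
  have := hdindep.isProbabilityMeasure
  set alive := fun t ω => rbar (fun _ _ => (1 : ℝ))
    (traj (habs f) (extPolicy π) (some s, a) (fun i => dseq i ω) t).1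
    (traj (habs f) (extPolicy π) (some s, a) (fun i => dseq i ω) t).2
  set never := {ω | ∀ n, (traj (habs f) (extPolicy π) (some s, a) (fun i => dseq i ω) n).1 ≠ none}
  have hbound : ∀ t, μ.real never ≤ γ ^ t := fun t => calc
    μ.real never ≤ μ.real {ω | 1 ≤ alive t ω} := by
      refine measureReal_mono fun ω hω => ?_
      obtain ⟨s', hs'⟩ := Option.ne_none_iff_exists'.mp (hω t)
      simp [alive, hs', rbar]
    _ ≤ ∫ ω, alive t ω ∂μ := by
      have hnonneg : ∀ ω, 0 ≤ alive t ω := fun ω => by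
        simp only [alive, rbar]
        split <;> norm_num
      simpa using mul_meas_ge_le_integral_of_nonneg (ae_of_all _ hnonneg)
        (integrable_rbar_traj_habs f π s a hdmeas _ t) 1
    _ = γ ^ t := by
      rw [integral_rbar_const_traj_habs f π s a hγ0 hνa hdmeas hdindep hddist, mul_one]
  have hnever : μ.real never = 0 := le_antisymm
    (ge_of_tendsto' (tendsto_pow_atTop_nhds_zero_of_lt_one hγ0 hγ1) hbound) measureReal_nonneg
  rw [ae_iff]
  simpa [never, measureReal_eq_zero_iff] using hnever

/-- `rbar (fun _ _ => K)` is `K` times the indicator that the chain has not been absorbed. -/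
theorem summable_integral_norm_of_abs_le_rbar [IsProbabilityMeasure νa] (hγ0 : 0 ≤ γ)
    (hγ1 : γ < 1)
    (hνa : ∀ (b : Bool) (x : W),
      νa {(b, x)} = (if b then ENNReal.ofReal γ else ENNReal.ofReal (1 - γ)) * ν {x})
    (hdmeas : ∀ t, Measurable (dseq t)) (hdindep : iIndepFun dseq μ)
    (hddist : ∀ t, μ.map (dseq t) = νa) {F : ℕ → Ω → ℝ} {K : ℝ}
    (hint : ∀ t, Integrable (F t) μ)
    (hF : ∀ t ω, |F t ω| ≤ rbar (fun _ _ => K)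
      (traj (habs f) (extPolicy π) (some s, a) (fun i => dseq i ω) t).1
      (traj (habs f) (extPolicy π) (some s, a) (fun i => dseq i ω) t).2) :
    Summable fun t => ∫ ω, ‖F t ω‖ ∂μ := by
  have := hdindep.isProbabilityMeasure
  refine Summable.of_nonneg_of_le (fun t => integral_nonneg fun ω => norm_nonneg _) (fun t => ?_)
    ((summable_geometric_of_lt_one hγ0 hγ1).mul_right K)
  rw [← integral_rbar_const_traj_habs f π s a hγ0 hνa hdmeas hdindep hddist]
  exact integral_mono (hint t).norm (integrable_rbar_traj_habs f π s a hdmeas _ t) (hF t)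

theorem integral_sum_range_absorption_eq_tsum [IsProbabilityMeasure νa] (hγ0 : 0 ≤ γ)
    (hγ1 : γ < 1)
    (hνa : ∀ (b : Bool) (x : W),
      νa {(b, x)} = (if b then ENNReal.ofReal γ else ENNReal.ofReal (1 - γ)) * ν {x})
    (hdmeas : ∀ t, Measurable (dseq t)) (hdindep : iIndepFun dseq μ)
    (hddist : ∀ t, μ.map (dseq t) = νa) {F : ℕ → Ω → ℝ} {K : ℝ}
    (hint : ∀ t, Integrable (F t) μ)
    (hF : ∀ t ω, |F t ω| ≤ rbar (fun _ _ => K)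
      (traj (habs f) (extPolicy π) (some s, a) (fun i => dseq i ω) t).1
      (traj (habs f) (extPolicy π) (some s, a) (fun i => dseq i ω) t).2) :
    ∫ ω, ∑ t ∈ Finset.range (sInf {n |
        (traj (habs f) (extPolicy π) (some s, a) (fun i => dseq i ω) n).1 = none}), F t ω ∂μ
      = ∑' t, ∫ ω, F t ω ∂μ :=
  integral_sum_range_sInf_eq_tsum
    (fun ω => monotone_traj_habs_fst_eq_none f π s a fun i => dseq i ω)
    (fun t ω h => abs_nonpos_iff.mp (by simpa [h, rbar] using hF t ω))
    (ae_exists_traj_habs_fst_eq_none f π s a hγ0 hγ1 hνa hdmeas hdindep hddist) hint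
    (summable_integral_norm_of_abs_le_rbar f π s a hγ0 hγ1 hνa hdmeas hdindep hddist hint hF)

end Expectations

theorem Qpol_eq_tsum {Ω₀ : Type*} [MeasurableSpace W] [Finite W] [MeasurableSingletonClass W]
    [Nonempty W] [MeasurableSpace Ω₀] {μ₀ : Measure Ω₀} [IsProbabilityMeasure μ₀]
    {wseq : ℕ → Ω₀ → W} (hwmeas : ∀ t, Measurable (wseq t)) {γ Rmax : ℝ} (hγ0 : 0 ≤ γ)
    (hγ1 : γ < 1) {r : S → A → ℝ} (hr : ∀ s a, |r s a| ≤ Rmax) (f : S → A → W → S)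
    (π : S → A) (s : S) (a : A) :
    Qpol μ₀ wseq γ r f π s a = ∑' t, γ ^ t * ∫ ω, r (traj f π (s, a) (fun i => wseq i ω) t).1
      (traj f π (s, a) (fun i => wseq i ω) t).2 ∂μ₀ := by
  have hint : ∀ t, Integrable (fun ω => r (traj f π (s, a) (fun i => wseq i ω) t).1
      (traj f π (s, a) (fun i => wseq i ω) t).2) μ₀ := fun t =>
    ((dependsOn_traj f π (s, a) t).comp fun x => r x.1 x.2).integrable_comp hwmeas
  have hbound : ∀ t, ∫ ω, ‖γ ^ t * r (traj f π (s, a) (fun i => wseq i ω) t).1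
      (traj f π (s, a) (fun i => wseq i ω) t).2‖ ∂μ₀ ≤ γ ^ t * Rmax := fun t => by
    refine (integral_mono ((hint t).const_mul _).norm (integrable_const (γ ^ t * Rmax))
      fun ω => ?_).trans_eq (by simp)
    rw [norm_mul, norm_pow, Real.norm_of_nonneg hγ0, Real.norm_eq_abs]
    exact mul_le_mul_of_nonneg_left (hr _ _) (pow_nonneg hγ0 t)
  rw [Qpol, ← integral_tsum_of_summable_integral_norm (fun t => (hint t).const_mul _)
    (Summable.of_nonneg_of_le (fun t => integral_nonneg fun ω => norm_nonneg _) hbound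
      ((summable_geometric_of_lt_one hγ0 hγ1).mul_right Rmax))]
  simp only [integral_const_mul]

end LBQL

theorem statement2_general
    {S A W Ω Ω₀ : Type*} [Fintype W]
    [Nonempty A] [Nonempty W]
    [MeasurableSpace W] [MeasurableSingletonClass W]
    [MeasurableSpace Ω] [MeasurableSpace Ω₀]
    (μ : Measure Ω) [IsProbabilityMeasure μ]
    (μ₀ : Measure Ω₀) [IsProbabilityMeasure μ₀]
    (ν : Measure W) [IsProbabilityMeasure ν]
    (νa : Measure (Bool × W)) [IsProbabilityMeasure νa]
    (γ Rmax : ℝ) (hγ0 : 0 < γ) (hγ1 : γ < 1)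
    (f : S → A → W → S) (r : S → A → ℝ) (hr : ∀ s a, |r s a| ≤ Rmax)
    (hνa : ∀ (b : Bool) (x : W),
      νa {(b, x)} = (if b then ENNReal.ofReal γ else ENNReal.ofReal (1 - γ)) * ν {x})
    -- the original chain, defining `Q^π`
    (wseq : ℕ → Ω₀ → W) (hwseqmeas : ∀ t, Measurable (wseq t))
    (hwseqindep : iIndepFun wseq μ₀)
    (hwseqdist : ∀ t, μ₀.map (wseq t) = ν)
    -- the i.i.d. disturbances of the absorbing chain
    (dseq : ℕ → Ω → Bool × W) (hdmeas : ∀ t, Measurable (dseq t))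
    (hdindep : iIndepFun dseq μ)
    (hddist : ∀ t, μ.map (dseq t) = νa)
    -- `φ ∈ Q-cal`: bounded and vanishing at the absorbing state
    (φ : Option S → A → ℝ) (C : ℝ) (hφbdd : ∀ s' a', |φ s' a'| ≤ C)
    (hφ0 : ∀ a', φ none a' = 0)
    (π : S → A) (s : S) (a : A) :
    (∫ ω, ∑ t ∈ Finset.range (sInf {n |
          (traj (habs f) (extPolicy π) (some s, a) (fun i => dseq i ω) n).1 = none}),
        penE f νa φ (extPolicy π) (fun i => dseq i ω) t
          (traj (habs f) (extPolicy π) (some s, a) (fun i => dseq i ω) t).1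
          (traj (habs f) (extPolicy π) (some s, a) (fun i => dseq i ω) t).2 ∂μ) = 0 ∧
      ∫ ω, innerL (habs f) (extPolicy π)
          (fun t s' a' => rbar r s' a' - penE f νa φ (extPolicy π) (fun i => dseq i ω) t s' a')
          (fun i => dseq i ω) 0
          (sInf {n |
            (traj (habs f) (extPolicy π) (some s, a) (fun i => dseq i ω) n).1 = none})
          (some s) a ∂μ = Qpol μ₀ wseq γ r f π s a := by
  have hpenint := integrable_penE_traj_habs (μ := μ) (νa := νa) f π s a hdmeas φ
  have hpen := integral_penE_traj_habs f π s a hdmeas hdindep hddist φ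
  refine ⟨?_, ?_⟩
  · rw [integral_sum_range_absorption_eq_tsum f π s a hγ0.le hγ1 hνa hdmeas hdindep hddist hpenint
      fun t ω => abs_penE_le_rbar f νa hφbdd hφ0 _ _ t _ _]
    simp [hpen]
  simp only [innerL_eq_sum, zero_add]
  refine (integral_sum_range_absorption_eq_tsum f π s a hγ0.le hγ1 hνa hdmeas hdindep hddist
    (fun t => (integrable_rbar_traj_habs f π s a hdmeas r t).sub (hpenint t))
    fun t ω => abs_rbar_sub_penE_le_rbar f νa hr hφbdd hφ0 _ _ t _ _).trans ?_
  rw [Qpol_eq_tsum hwseqmeas hγ0.le hγ1 hr]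
  refine tsum_congr fun t => ?_
  rw [integral_sub' (integrable_rbar_traj_habs f π s a hdmeas r t) (hpenint t), hpen, sub_zero,
    integral_rbar_traj_habs f π s a hγ0.le hνa hdmeas hdindep hddist,
    integral_comp_eq_integral_pi hwseqmeas hwseqindep hwseqdist
      ((dependsOn_traj f π (s, a) t).comp fun x => r x.1 x.2)]

/-- **zero-mean penalties and unbiased lower bound, exact penalties.**
For every deterministic Markov policy `π`, every `φ` in `Q-cal` (i.e. `φ` vanishing at
the absorbing state), and every state-action pair `(s, a)`:
the expected sum, up to the absorption time `τ`, of the exact penalties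
`ζ_t^π (s_t, a_t, w_{t+1} | φ)` along the absorbing-chain trajectory generated by `π`
from `(s_0, a_0) = (s, a)` is `0`; consequently, the value of the lower-bound inner DP
computed with the exact penalties satisfies `E [Q^L_0 (s,a)] = Q^π (s,a)`. -/
theorem statement2
    {S A W Ω Ω₀ : Type*} [Fintype S] [Fintype A] [Fintype W]
    [Nonempty S] [Nonempty A] [Nonempty W]
    [MeasurableSpace W] [MeasurableSingletonClass W]
    [MeasurableSpace Ω] [MeasurableSpace Ω₀]
    (μ : Measure Ω) [IsProbabilityMeasure μ]
    (μ₀ : Measure Ω₀) [IsProbabilityMeasure μ₀]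
    (ν : Measure W) [IsProbabilityMeasure ν]
    (νa : Measure (Bool × W)) [IsProbabilityMeasure νa]
    (γ Rmax : ℝ) (hγ0 : 0 < γ) (hγ1 : γ < 1)
    (f : S → A → W → S) (r : S → A → ℝ) (hr : ∀ s a, |r s a| ≤ Rmax)
    (hνa : ∀ (b : Bool) (x : W),
      νa {(b, x)} = (if b then ENNReal.ofReal γ else ENNReal.ofReal (1 - γ)) * ν {x})
    -- the original chain, defining `Q^π`
    (wseq : ℕ → Ω₀ → W) (hwseqmeas : ∀ t, Measurable (wseq t))
    (hwseqindep : iIndepFun wseq μ₀)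
    (hwseqdist : ∀ t, μ₀.map (wseq t) = ν)
    -- the i.i.d. disturbances of the absorbing chain
    (dseq : ℕ → Ω → Bool × W) (hdmeas : ∀ t, Measurable (dseq t))
    (hdindep : iIndepFun dseq μ)
    (hddist : ∀ t, μ.map (dseq t) = νa)
    -- `φ ∈ Q-cal`: bounded and vanishing at the absorbing state
    (φ : Option S → A → ℝ) (C : ℝ) (hφbdd : ∀ s' a', |φ s' a'| ≤ C)
    (hφ0 : ∀ a', φ none a' = 0)
    (π : S → A) (s : S) (a : A) :
    (∫ ω, ∑ t ∈ Finset.range (sInf {n |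
          (traj (habs f) (extPolicy π) (some s, a) (fun i => dseq i ω) n).1 = none}),
        penE f νa φ (extPolicy π) (fun i => dseq i ω) t
          (traj (habs f) (extPolicy π) (some s, a) (fun i => dseq i ω) t).1
          (traj (habs f) (extPolicy π) (some s, a) (fun i => dseq i ω) t).2 ∂μ) = 0 ∧
      ∫ ω, innerL (habs f) (extPolicy π)
          (fun t s' a' => rbar r s' a' - penE f νa φ (extPolicy π) (fun i => dseq i ω) t s' a')
          (fun i => dseq i ω) 0
          (sInf {n |
            (traj (habs f) (extPolicy π) (some s, a) (fun i => dseq i ω) n).1 = none})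
          (some s) a ∂μ = Qpol μ₀ wseq γ r f π s a :=
  statement2_general μ μ₀ ν νa γ Rmax hγ0 hγ1 f r hr hνa wseq hwseqmeas hwseqindep hwseqdist dseq
    hdmeas hdindep hddist φ C hφbdd hφ0 π s a
end

section
/- One-step preservation of bound consistency (Lemma A.1): fix n >= 1 and suppose that L_{n-1}(s,a) <= U_{n-1}(s,a) for all (s,a), that Q'_{n-1} is bounded, and that alpha_{n-1}(s,a) <= 1 for all (s,a). Then after one iteration of the LBQL algorithm (in which the upper-bound and lower-bound inner problems are solved with the same sample path and the same estimated penalty values), L_n(s,a) <= U_n(s,a) for all (s,a). -/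
open MeasureTheory ProbabilityTheory Filter

open LBQL

theorem innerL_le_innerU {S' D A : Type*} [Fintype A] [Nonempty A] (h : S' → A → D → S')
    (π : S' → A) (g : ℕ → S' → A → ℝ) (w : ℕ → D) (m t : ℕ) (s : S') (a : A) :
    innerL h π g w t m s a ≤ innerU h g w t m s a := by
  induction m generalizing t s a with
  | zero => simp only [innerL, innerU, le_refl]
  | succ m ih =>
    simp only [innerL, innerU]
    gcongr
    exact (ih _ _ _).trans (Finite.le_ciSup _ _)

theorem add_mul_sub_le_add_mul_sub {𝕜 : Type*} [Field 𝕜] [LinearOrder 𝕜]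
    [IsStrictOrderedRing 𝕜] {x x' y y' β : 𝕜} (hx : x ≤ x') (hy : y ≤ y') (hβ0 : 0 ≤ β)
    (hβ1 : β ≤ 1) :
    x + β * (y - x) ≤ x' + β * (y' - x') := by
  simpa only [AffineMap.lineMap_apply_ring', add_comm] using
    lineMap_mono_endpoints hx hy hβ0 hβ1

theorem statement7_general
    {S A W : Type*} [Fintype A] [Nonempty A]
    (ρ : ℝ) (f : S → A → W → S) (r : S → A → ℝ) (K : ℕ)
    -- previous iterates
    (Lold Uold : S → A → ℝ)
    (hLU : ∀ s a, Lold s a ≤ Uold s a)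
    -- the current transition and stepsizes
    (scur : S) (acur : A)
    (β : ℝ) (hβ0 : 0 ≤ β) (hβ1 : β ≤ 1)
    -- the Q-learning update
    (Qnew : S → A → ℝ)
    -- inner sample path, its absorption length, batches, and a greedy policy for Q_n
    (path : ℕ → Bool × W) (τ : ℕ)
    (batch : ℕ → Option S → A → Fin K → Bool × W)
    (πn : Option S → A)
    -- the bound updates
    (Lnew Unew : S → A → ℝ)
    (hUnew_on : Unew scur acur = max (-ρ) (Uold scur acur + β *
      (innerU (habs f)
          (fun t s' a' => rbar r s' a' - penB f K (ext0 Qnew) πn path batch t s' a')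
          path 0 τ (some scur) acur - Uold scur acur)))
    (hUnew_off : ∀ s a, ¬(s = scur ∧ a = acur) → Unew s a = Uold s a)
    (hLnew_on : Lnew scur acur = min ρ (Lold scur acur + β *
      (innerL (habs f) πn
          (fun t s' a' => rbar r s' a' - penB f K (ext0 Qnew) πn path batch t s' a')
          path 0 τ (some scur) acur - Lold scur acur)))
    (hLnew_off : ∀ s a, ¬(s = scur ∧ a = acur) → Lnew s a = Lold s a) :
    ∀ s a, Lnew s a ≤ Unew s a := by
  intro s a
  by_cases hcur : s = scur ∧ a = acur
  · obtain ⟨rfl, rfl⟩ := hcur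
    rw [hLnew_on, hUnew_on]
    -- both inner problems see the same path and the same penalties
    have hinner := innerL_le_innerU (habs f) πn
      (fun t s' a' => rbar r s' a' - penB f K (ext0 Qnew) πn path batch t s' a') path τ 0
      (some s) a
    exact (min_le_right _ _).trans
      ((add_mul_sub_le_add_mul_sub (hLU s a) hinner hβ0 hβ1).trans (le_max_right _ _))
  · rw [hLnew_off s a hcur, hUnew_off s a hcur]
    exact hLU s a

/-- **Lemma A.1: one-step preservation of bound consistency.**
Suppose that at the previous iteration `L_{n-1} (s,a) ≤ U_{n-1} (s,a)` for all `(s,a)`,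
that `Q'_{n-1}` is bounded, and that the stepsize satisfies `α_{n-1} ≤ 1`. Then, after
one iteration of the LBQL algorithm — in which the upper- and lower-bound inner problems
are solved with the same sample path `path` (of realized absorption length `τ`) and the
same estimated (batch) penalty values, with `φ = Q_n` and a greedy policy `π_φ` — the
new bounds satisfy `L_n (s,a) ≤ U_n (s,a)` for all `(s,a)`. -/
theorem statement7
    {S A W : Type*} [Fintype S] [Fintype A] [Fintype W]
    [Nonempty S] [Nonempty A] [Nonempty W]
    (γ Rmax ρ : ℝ) (hγ0 : 0 < γ) (hγ1 : γ < 1)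
    (f : S → A → W → S) (r : S → A → ℝ)
    (hr : ∀ s a, |r s a| ≤ Rmax) (hρ : ρ = Rmax / (1 - γ))
    (K : ℕ) (hK : 0 < K)
    -- previous iterates
    (Lold Uold Q'old : S → A → ℝ)
    (hLU : ∀ s a, Lold s a ≤ Uold s a)
    (hQ'bdd : ∃ C, ∀ s a, |Q'old s a| ≤ C)
    -- the current transition and stepsizes
    (scur : S) (acur : A) (wobs : W)
    (α β : ℝ) (hα0 : 0 ≤ α) (hα1 : α ≤ 1) (hβ0 : 0 ≤ β) (hβ1 : β ≤ 1)
    -- the Q-learning update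
    (Qnew : S → A → ℝ)
    (hQnew_on : Qnew scur acur = Q'old scur acur + α *
      (r scur acur + γ * (⨆ a' : A, Q'old (f scur acur wobs) a') - Q'old scur acur))
    (hQnew_off : ∀ s a, ¬(s = scur ∧ a = acur) → Qnew s a = Q'old s a)
    -- inner sample path, its absorption length, batches, and a greedy policy for Q_n
    (path : ℕ → Bool × W) (τ : ℕ) (hτ : τ = absTime path)
    (batch : ℕ → Option S → A → Fin K → Bool × W)
    (πn : Option S → A)
    (hπn : ∀ s' a', ext0 Qnew s' a' ≤ ext0 Qnew s' (πn s'))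
    -- the bound updates
    (Lnew Unew : S → A → ℝ)
    (hUnew_on : Unew scur acur = max (-ρ) (Uold scur acur + β *
      (innerU (habs f)
          (fun t s' a' => rbar r s' a' - penB f K (ext0 Qnew) πn path batch t s' a')
          path 0 τ (some scur) acur - Uold scur acur)))
    (hUnew_off : ∀ s a, ¬(s = scur ∧ a = acur) → Unew s a = Uold s a)
    (hLnew_on : Lnew scur acur = min ρ (Lold scur acur + β *
      (innerL (habs f) πn
          (fun t s' a' => rbar r s' a' - penB f K (ext0 Qnew) πn path batch t s' a')
          path 0 τ (some scur) acur - Lold scur acur)))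
    (hLnew_off : ∀ s a, ¬(s = scur ∧ a = acur) → Lnew s a = Lold s a) :
    ∀ s a, Lnew s a ≤ Unew s a :=
  statement7_general ρ f r K Lold Uold hLU scur acur β hβ0 hβ1 Qnew path τ batch πn Lnew Unew
    hUnew_on hUnew_off hLnew_on hLnew_off
end

section
/- Boundedness of the LBQL iterates (Proposition 3(i)): along every realization of the LBQL algorithm with stepsizes alpha_n(s,a) <= 1 and initial values satisfying L_0 = -rho <= Q_0 <= rho = U_0 and |Q'_0| <= rho, the action-value iterates remain bounded: sup over all n and all (s,a) of max(|Q_n(s,a)|, |Q'_n(s,a)|) is finite. -/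
open MeasureTheory ProbabilityTheory Filter

open LBQL

/-!
The interval `[-ρ, ρ]` is invariant under both steps of the algorithm. The Q-learning step
is a convex combination of `Q'` with the target `r + γ max Q'`, and the target stays in
`[-ρ, ρ]` because `R_max + γ ρ = ρ`. The projection step clamps `Q` between `L ≤ ρ` and
`U ≥ -ρ`, which the truncations `min ρ` and `max (-ρ)` in the bound updates guarantee
whatever the penalties.
-/

theorem abs_ciSup_le {ι : Type*} [Finite ι] [Nonempty ι] {g : ι → ℝ} {c : ℝ}
    (h : ∀ i, |g i| ≤ c) : |⨆ i, g i| ≤ c := by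
  obtain ⟨i⟩ := ‹Nonempty ι›
  refine abs_le.mpr ⟨?_, ciSup_le fun j => (abs_le.mp (h j)).2⟩
  exact (abs_le.mp (h i)).1.trans (le_ciSup (Finite.bddAbove_range g) i)

theorem abs_add_mul_sub_le {x y α c : ℝ} (hα0 : 0 ≤ α) (hα1 : α ≤ 1)
    (hx : |x| ≤ c) (hy : |y| ≤ c) : |x + α * (y - x)| ≤ c :=
  calc |x + α * (y - x)| = |(1 - α) * x + α * y| := by ring_nf
    _ ≤ (1 - α) * |x| + α * |y| := by
      refine (abs_add_le _ _).trans ?_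
      rw [abs_mul, abs_mul, abs_of_nonneg (sub_nonneg.mpr hα1), abs_of_nonneg hα0]
    _ ≤ (1 - α) * c + α * c := by gcongr
    _ = c := by ring

theorem abs_max_min_le {l u q c : ℝ} (hl : l ≤ c) (hu : -c ≤ u) (hq : |q| ≤ c) :
    |max l (min u q)| ≤ c := by
  obtain ⟨hq₁, hq₂⟩ := abs_le.mp hq
  exact abs_le.mpr
    ⟨le_max_of_le_right (le_min hu hq₁), max_le hl ((min_le_right u q).trans hq₂)⟩

namespace LBQL.Run

variable {S A W : Type*} [Fintype A] [Nonempty A] {f : S → A → W → S} {r : S → A → ℝ}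
  {γ ρ : ℝ} (R : Run f r γ ρ)

theorem L_succ_le (n : ℕ) : R.L (n + 1) (R.sn n) (R.an n) ≤ ρ := by
  rw [R.hLon n]
  exact min_le_left _ _

theorem neg_le_U_succ (n : ℕ) : -ρ ≤ R.U (n + 1) (R.sn n) (R.an n) := by
  rw [R.hUon n]
  exact le_max_left _ _

theorem abs_Q_succ_le {Rmax : ℝ} (hγ : 0 ≤ γ) (hr : ∀ s a, |r s a| ≤ Rmax)
    (hρ : Rmax + γ * ρ = ρ) {n : ℕ} (hQ' : ∀ s a, |R.Q' n s a| ≤ ρ) (s : S) (a : A) :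
    |R.Q (n + 1) s a| ≤ ρ := by
  by_cases h : s = R.sn n ∧ a = R.an n
  · obtain ⟨rfl, rfl⟩ := h
    have htarget : |r (R.sn n) (R.an n) + γ * ⨆ a', R.Q' n (R.sn (n + 1)) a'| ≤ ρ :=
      calc _ ≤ |r (R.sn n) (R.an n)| + γ * |⨆ a', R.Q' n (R.sn (n + 1)) a'| :=
            (abs_add_le _ _).trans_eq (by rw [abs_mul, abs_of_nonneg hγ])
        _ ≤ Rmax + γ * ρ := by gcongr; exacts [hr _ _, abs_ciSup_le (hQ' _)]
        _ = ρ := hρ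
    obtain ⟨hα0, hα1⟩ := R.halpha n (R.sn n) (R.an n)
    rw [R.hQon n]
    exact abs_add_mul_sub_le hα0 hα1 (hQ' _ _) htarget
  · rw [R.hQoff n s a h]
    exact hQ' s a

theorem abs_Q'_le {Rmax : ℝ} (hγ : 0 ≤ γ) (hr : ∀ s a, |r s a| ≤ Rmax)
    (hρ : Rmax + γ * ρ = ρ) (hQ'0 : ∀ s a, |R.Q' 0 s a| ≤ ρ) (n : ℕ) (s : S) (a : A) :
    |R.Q' n s a| ≤ ρ := by
  induction n generalizing s a with
  | zero => exact hQ'0 s a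
  | succ n ih =>
    have hQ := R.abs_Q_succ_le hγ hr hρ ih
    by_cases h : s = R.sn n ∧ a = R.an n
    · obtain ⟨rfl, rfl⟩ := h
      rw [R.hQ'on n]
      exact abs_max_min_le (R.L_succ_le n) (R.neg_le_U_succ n) (hQ _ _)
    · rw [R.hQ'off n s a h]
      exact hQ s a

theorem abs_Q_le {Rmax : ℝ} (hγ : 0 ≤ γ) (hr : ∀ s a, |r s a| ≤ Rmax)
    (hρ : Rmax + γ * ρ = ρ) (hQ'0 : ∀ s a, |R.Q' 0 s a| ≤ ρ) (n : ℕ) (s : S) (a : A) :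
    |R.Q n s a| ≤ ρ := by
  cases n with
  | zero => rw [← R.hQ'0]; exact hQ'0 s a
  | succ n => exact R.abs_Q_succ_le hγ hr hρ (R.abs_Q'_le hγ hr hρ hQ'0 n) s a

end LBQL.Run

theorem statement8_general
    {S A W : Type*} [Fintype A]
    [Nonempty A]
    (γ Rmax ρ : ℝ) (hγ0 : 0 < γ) (hγ1 : γ < 1)
    (f : S → A → W → S) (r : S → A → ℝ)
    (hr : ∀ s a, |r s a| ≤ Rmax) (hρ : ρ = Rmax / (1 - γ))
    (R : Run f r γ ρ)
    (hQ'0 : ∀ s a, |R.Q' 0 s a| ≤ ρ) :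
    ∃ C, ∀ n s a, |R.Q n s a| ≤ C ∧ |R.Q' n s a| ≤ C := by
  have hfix : Rmax + γ * ρ = ρ := by
    rw [hρ]
    field_simp [(sub_pos.mpr hγ1).ne']
    ring
  exact ⟨ρ, fun n s a =>
    ⟨R.abs_Q_le hγ0.le hr hfix hQ'0 n s a, R.abs_Q'_le hγ0.le hr hfix hQ'0 n s a⟩⟩

/-- **Proposition 3(i): boundedness of the LBQL iterates.**
Along every realization `R` of the LBQL algorithm (with empirical batch penalties,
stepsizes in `[0,1]`) with initial values `L_0 = -ρ ≤ Q_0 ≤ ρ = U_0` and `|Q'_0| ≤ ρ`,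
the action-value iterates remain bounded:
`sup_{n, (s,a)} max (|Q_n (s,a)|, |Q'_n (s,a)|) < ∞`. -/
theorem statement8
    {S A W : Type*} [Fintype S] [Fintype A] [Fintype W]
    [Nonempty S] [Nonempty A] [Nonempty W]
    (γ Rmax ρ : ℝ) (hγ0 : 0 < γ) (hγ1 : γ < 1)
    (f : S → A → W → S) (r : S → A → ℝ)
    (hr : ∀ s a, |r s a| ≤ Rmax) (hρ : ρ = Rmax / (1 - γ))
    (K : ℕ) (hK : 0 < K)
    (R : Run f r γ ρ)
    (batch : ℕ → ℕ → Option S → A → Fin K → Bool × W)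
    (hpen : ∀ n t s' a', R.pen n t s' a' =
      penB f K (ext0 (R.Q (n + 1))) (R.pol n) (R.path n) (batch n) t s' a')
    (hL0 : ∀ s a, R.L 0 s a = -ρ) (hU0 : ∀ s a, R.U 0 s a = ρ)
    (hQ0 : ∀ s a, -ρ ≤ R.Q 0 s a ∧ R.Q 0 s a ≤ ρ)
    (hQ'0 : ∀ s a, |R.Q' 0 s a| ≤ ρ) :
    ∃ C, ∀ n s a, |R.Q n s a| ≤ C ∧ |R.Q' n s a| ≤ C :=
  statement8_general γ Rmax ρ hγ0 hγ1 f r hr hρ R hQ'0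
end
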